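/- arXiv:2605.25608 — 2 statements merged into one kernel-verified Lean document; each statement's English description precedes it below -/
import Mathlib

section
/- Let φ_i ∈ NN(W_i, D, K_i) for i = 1, …, N be ReLU networks of the same depth D with the same input dimension. Then the concatenated map φ(x) := (φ_1(x), …, φ_N(x)) belongs to NN(∑_{i=1}^N W_i, D, (√(N+1))^D √(∑_{i=1}^N K_i²)). -/
/-!
Since ReLU is positively homogeneous, the layers of each network can be rescaled without changing
the function so that every hidden layer has `‖A_ℓ‖_F² + ‖b_ℓ‖² ≤ 1` and the output matrix carries
the whole constant, `‖A_D‖_F = κ`. Running the rescaled networks in parallel (stacked first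
layer, block-diagonal later layers) gives hidden layers with `‖A_ℓ‖_F² + ‖b_ℓ‖² + 1 ≤ N + 1` and
an output matrix with `‖A_D‖_F² = ∑ κ_i² ≤ ∑ K_i²`.
-/

open scoped BigOperators

noncomputable section

/-- ReLU activation. -/
def relu (t : ℝ) : ℝ := max 0 t

/-- Squared Frobenius norm of a matrix. -/
def frobSq {m n : ℕ} (A : Matrix (Fin m) (Fin n) ℝ) : ℝ := ∑ i, ∑ j, (A i j) ^ 2

/-- Frobenius norm of a matrix. -/
def frob {m n : ℕ} (A : Matrix (Fin m) (Fin n) ℝ) : ℝ := Real.sqrt (frobSq A)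

/-- Squared Euclidean norm of a vector. -/
def sqNorm {n : ℕ} (v : Fin n → ℝ) : ℝ := ∑ i, (v i) ^ 2

/-- A ReLU network of depth `D`, input dimension `d` and output dimension `k`:
layer widths `N 0 = d, N 1, …, N D, N (D+1) = k`, weight matrices `A ℓ` and biases `b ℓ`. -/
structure ReluNetwork (D d k : ℕ) where
  N : ℕ → ℕ
  hN0 : N 0 = d
  hNlast : N (D + 1) = k
  A : (ℓ : ℕ) → Matrix (Fin (N (ℓ + 1))) (Fin (N ℓ)) ℝ
  b : (ℓ : ℕ) → Fin (N (ℓ + 1)) → ℝ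

namespace ReluNetwork

variable {D d k : ℕ}

/-- Output of the `ℓ`-th hidden layer (after the ReLU). -/
def layer (net : ReluNetwork D d k) : (ℓ : ℕ) → (Fin d → ℝ) → Fin (net.N ℓ) → ℝ
  | 0 => fun x i => x (Fin.cast net.hN0 i)
  | (ℓ + 1) => fun x i =>
      relu ((∑ j, net.A ℓ i j * net.layer ℓ x j) + net.b ℓ i)

/-- The function realized by the network:
`f_θ(x) = A_D σ(A_{D-1} σ( ⋯ σ(A_0 x + b_0) ⋯ ) + b_{D-1})`. -/
def realize (net : ReluNetwork D d k) (x : Fin d → ℝ) : Fin k → ℝ :=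
  fun i => ∑ j, net.A D (Fin.cast net.hNlast.symm i) j * net.layer D x j

/-- Multiplicative Frobenius norm constraint
`κ(θ) = ‖A_D‖_F ∏_{ℓ<D} √(‖A_ℓ‖_F² + ‖b_ℓ‖² + 1)`. -/
def kappa (net : ReluNetwork D d k) : ℝ :=
  frob (net.A D) *
    ∏ ℓ ∈ Finset.range D, Real.sqrt (frobSq (net.A ℓ) + sqNorm (net.b ℓ) + 1)

/-- All (hidden) layer widths are at most `W`. -/
def widthLe (net : ReluNetwork D d k) (W : ℕ) : Prop :=
  ∀ ℓ, 0 < ℓ → ℓ ≤ D → net.N ℓ ≤ W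

end ReluNetwork

/-- The norm-constrained class `NN(W, D, K)` of functions `ℝ^d → ℝ^k` realized by depth-`D`
ReLU networks with all layer widths at most `W` and `κ(θ) ≤ K`. -/
def NNclass (d k W D : ℕ) (K : ℝ) : Set ((Fin d → ℝ) → Fin k → ℝ) :=
  {f | ∃ net : ReluNetwork D d k, net.widthLe W ∧ net.kappa ≤ K ∧ net.realize = f}

/-- Position of the `j`-th output of the `i`-th block inside the concatenation of blocks of
sizes `k 0, …, k (N-1)`. -/
def finAssemble {N : ℕ} (k : Fin N → ℕ) (i : Fin N) (j : Fin (k i)) : Fin (∑ i', k i') :=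
  ⟨(∑ i' ∈ Finset.univ.filter (fun i' : Fin N => i' < i), k i') + (j : ℕ), by
    have hj := j.isLt
    have hmem : i ∉ Finset.univ.filter (fun i' : Fin N => i' < i) := by simp
    have h1 : (∑ i' ∈ Finset.univ.filter (fun i' : Fin N => i' < i), k i') + (j : ℕ)
        < ∑ i' ∈ insert i (Finset.univ.filter (fun i' : Fin N => i' < i)), k i' := by
      rw [Finset.sum_insert hmem]; omega
    exact lt_of_lt_of_le h1 (Finset.sum_le_sum_of_subset (Finset.subset_univ _))⟩

open Finset

lemma relu_mul_of_nonneg {c : ℝ} (hc : 0 ≤ c) (t : ℝ) : relu (c * t) = c * relu t := by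
  rw [relu, relu, mul_max_of_nonneg _ _ hc, mul_zero]

lemma frobSq_nonneg {m n : ℕ} (A : Matrix (Fin m) (Fin n) ℝ) : 0 ≤ frobSq A := by
  unfold frobSq; positivity

lemma sqNorm_nonneg {n : ℕ} (v : Fin n → ℝ) : 0 ≤ sqNorm v := by
  unfold sqNorm; positivity

lemma frobSq_smul {m n : ℕ} (c : ℝ) (A : Matrix (Fin m) (Fin n) ℝ) :
    frobSq (c • A) = c ^ 2 * frobSq A := by
  simp only [frobSq, Matrix.smul_apply, smul_eq_mul, mul_pow, mul_sum]

lemma sqNorm_smul {n : ℕ} (c : ℝ) (v : Fin n → ℝ) : sqNorm (c • v) = c ^ 2 * sqNorm v := by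
  simp only [sqNorm, Pi.smul_apply, smul_eq_mul, mul_pow, mul_sum]

lemma frob_smul {m n : ℕ} (c : ℝ) (A : Matrix (Fin m) (Fin n) ℝ) :
    frob (c • A) = |c| * frob A := by
  rw [frob, frob, frobSq_smul, Real.sqrt_mul (sq_nonneg c), Real.sqrt_sq_eq_abs]

lemma frob_sq {m n : ℕ} (A : Matrix (Fin m) (Fin n) ℝ) : frob A ^ 2 = frobSq A :=
  Real.sq_sqrt (frobSq_nonneg A)

namespace ReluNetwork

variable {D d k : ℕ}

def layerNorm (net : ReluNetwork D d k) (ℓ : ℕ) : ℝ :=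
  √(frobSq (net.A ℓ) + sqNorm (net.b ℓ) + 1)

lemma one_le_layerNorm (net : ReluNetwork D d k) (ℓ : ℕ) : 1 ≤ net.layerNorm ℓ := by
  rw [layerNorm, Real.one_le_sqrt]
  linarith [frobSq_nonneg (net.A ℓ), sqNorm_nonneg (net.b ℓ)]

lemma one_le_prod_layerNorm (net : ReluNetwork D d k) (ℓ : ℕ) :
    1 ≤ ∏ j ∈ range ℓ, net.layerNorm j :=
  one_le_prod fun j _ => net.one_le_layerNorm j

lemma kappa_eq (net : ReluNetwork D d k) :
    net.kappa = frob (net.A D) * ∏ ℓ ∈ range D, net.layerNorm ℓ := rfl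

/-- Scales the output of layer `ℓ` by `s ℓ` (ReLU is positively homogeneous). -/
abbrev rescale (net : ReluNetwork D d k) (s : ℕ → ℝ) : ReluNetwork D d k where
  N := net.N
  hN0 := net.hN0
  hNlast := net.hNlast
  A ℓ := (s (ℓ + 1) / s ℓ) • net.A ℓ
  b ℓ := s (ℓ + 1) • net.b ℓ

variable {s : ℕ → ℝ}

lemma layer_rescale (net : ReluNetwork D d k) (hs : ∀ ℓ, 0 < s ℓ) (hs0 : s 0 = 1) (ℓ : ℕ)
    (x : Fin d → ℝ) : (net.rescale s).layer ℓ x = s ℓ • net.layer ℓ x := by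
  induction ℓ with
  | zero => funext j; simp [layer, hs0]
  | succ ℓ ih =>
    funext j
    have hpre : (∑ q, (net.rescale s).A ℓ j q * (net.rescale s).layer ℓ x q)
        + (net.rescale s).b ℓ j
        = s (ℓ + 1) * ((∑ q, net.A ℓ j q * net.layer ℓ x q) + net.b ℓ j) := by
      simp only [ih, Matrix.smul_apply, Pi.smul_apply, smul_eq_mul, mul_add, mul_sum]
      congr 1
      refine sum_congr rfl fun q _ => ?_
      field_simp [(hs ℓ).ne']
    change relu _ = s (ℓ + 1) * relu _
    rw [hpre, relu_mul_of_nonneg (hs (ℓ + 1)).le]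

lemma realize_rescale (net : ReluNetwork D d k) (hs : ∀ ℓ, 0 < s ℓ) (hs0 : s 0 = 1)
    (x : Fin d → ℝ) : (net.rescale s).realize x = s (D + 1) • net.realize x := by
  funext i
  simp only [realize, net.layer_rescale hs hs0, Pi.smul_apply, Matrix.smul_apply,
    smul_eq_mul, mul_sum]
  refine sum_congr rfl fun q _ => ?_
  field_simp [(hs D).ne']

def IsBalanced (net : ReluNetwork D d k) : Prop :=
  ∀ ℓ < D, frobSq (net.A ℓ) + sqNorm (net.b ℓ) ≤ 1

/-- Balances every hidden layer and moves all of `κ` onto the output matrix; the value `1`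
beyond depth `D` keeps the realized function unchanged. -/
def balanceScale (net : ReluNetwork D d k) (ℓ : ℕ) : ℝ :=
  if ℓ ≤ D then (∏ j ∈ range ℓ, net.layerNorm j)⁻¹ else 1

lemma balanceScale_pos (net : ReluNetwork D d k) (ℓ : ℕ) : 0 < net.balanceScale ℓ := by
  unfold balanceScale
  split_ifs
  · exact inv_pos.2 (one_pos.trans_le (net.one_le_prod_layerNorm ℓ))
  · exact one_pos

lemma balanceScale_le_one (net : ReluNetwork D d k) (ℓ : ℕ) : net.balanceScale ℓ ≤ 1 := by
  unfold balanceScale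
  split_ifs
  · exact inv_le_one_of_one_le₀ (net.one_le_prod_layerNorm ℓ)
  · exact le_rfl

lemma balanceScale_succ (net : ReluNetwork D d k) {ℓ : ℕ} (hℓ : ℓ < D) :
    net.balanceScale (ℓ + 1) = net.balanceScale ℓ / net.layerNorm ℓ := by
  simp only [balanceScale, if_pos (Nat.succ_le_of_lt hℓ), if_pos hℓ.le, prod_range_succ, mul_inv,
    div_eq_mul_inv]

abbrev balance (net : ReluNetwork D d k) : ReluNetwork D d k := net.rescale net.balanceScale

lemma realize_balance (net : ReluNetwork D d k) : net.balance.realize = net.realize := by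
  funext x
  rw [balance, realize_rescale _ net.balanceScale_pos (by simp [balanceScale])]
  simp [balanceScale]

lemma isBalanced_balance (net : ReluNetwork D d k) : net.balance.IsBalanced := by
  intro ℓ hℓ
  have hn := net.one_le_layerNorm ℓ
  have hsq : net.layerNorm ℓ ^ 2 = frobSq (net.A ℓ) + sqNorm (net.b ℓ) + 1 :=
    Real.sq_sqrt (by linarith [frobSq_nonneg (net.A ℓ), sqNorm_nonneg (net.b ℓ)])
  have hs := net.balanceScale_pos ℓ
  have hc2 : net.balanceScale ℓ ^ 2 ≤ 1 := pow_le_one₀ hs.le (net.balanceScale_le_one ℓ)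
  have hβ := sqNorm_nonneg (net.b ℓ)
  set a := frobSq (net.A ℓ)
  set β := sqNorm (net.b ℓ)
  set c := net.balanceScale ℓ
  set L := net.layerNorm ℓ
  simp only [balance, net.balanceScale_succ hℓ, frobSq_smul, sqNorm_smul]
  calc (c / L / c) ^ 2 * a + (c / L) ^ 2 * β = (a + c ^ 2 * β) / L ^ 2 := by
        field_simp
    _ ≤ (a + β) / L ^ 2 := by
        gcongr
        nlinarith
    _ ≤ 1 := by
        rw [div_le_one (by positivity), hsq]
        linarith

lemma frob_balance_A_eq_kappa (net : ReluNetwork D d k) : frob (net.balance.A D) = net.kappa := by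
  have hprod := one_pos.trans_le (net.one_le_prod_layerNorm D)
  simp only [balance, frob_smul, kappa_eq, balanceScale, le_refl, if_true,
    show ¬ D + 1 ≤ D by omega, if_false, one_div, inv_inv, abs_of_pos hprod]
  ring

end ReluNetwork

lemma finSigmaFinEquiv_mk {N : ℕ} (k : Fin N → ℕ) (i : Fin N) (j : Fin (k i)) :
    finSigmaFinEquiv ⟨i, j⟩ = finAssemble k i j := by
  ext
  rw [finSigmaFinEquiv_apply, finAssemble]
  congr 1
  refine sum_bij (fun a _ => Fin.castLE i.2.le a)
    (fun a _ => by simp [Fin.lt_def, -Fin.val_fin_lt])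
    (fun a _ b _ h => Fin.castLE_injective _ h) (fun b hb => ?_) (fun _ _ => rfl)
  simp only [mem_filter, mem_univ, true_and] at hb
  exact ⟨⟨b, hb⟩, mem_univ _, rfl⟩

lemma cast_finSigmaFinEquiv {N : ℕ} {k k' : Fin N → ℕ} (h : k = k')
    (hsum : ∑ i, k i = ∑ i, k' i) (i : Fin N) (j : Fin (k i)) :
    Fin.cast hsum (finSigmaFinEquiv ⟨i, j⟩) = finSigmaFinEquiv ⟨i, Fin.cast (congrFun h i) j⟩ := by
  subst h
  rfl

lemma Matrix.sum_blockDiagonal'_row {ι α β : Type*} {m' n' : ι → Type*} [Fintype ι]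
    [DecidableEq ι] [∀ i, Fintype (n' i)] [Zero α] [AddCommMonoid β]
    (M : ∀ i, Matrix (m' i) (n' i) α) (i : ι) (p : m' i) (f : (Σ i, n' i) → α → β)
    (hf : ∀ s, f s 0 = 0) :
    ∑ s, f s (Matrix.blockDiagonal' M ⟨i, p⟩ s) = ∑ q, f ⟨i, q⟩ (M i p q) := by
  rw [Fintype.sum_sigma, sum_eq_single i]
  · simp only [Matrix.blockDiagonal'_apply_eq]
  · intro i' _ hi'
    simp only [Matrix.blockDiagonal'_apply_ne M _ _ hi'.symm, hf, sum_const_zero]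
  · simp

namespace ReluNetwork

variable {D d N : ℕ} {k : Fin N → ℕ}

abbrev concatWidth (g : (i : Fin N) → ReluNetwork D d (k i)) : ℕ → ℕ
  | 0 => d
  | ℓ + 1 => ∑ i, (g i).N (ℓ + 1)

abbrev concat (g : (i : Fin N) → ReluNetwork D d (k i)) : ReluNetwork D d (∑ i, k i) where
  N := concatWidth g
  hN0 := rfl
  hNlast := sum_congr rfl fun i _ => (g i).hNlast
  A
    | 0 => (Matrix.of fun (s : Σ i, Fin ((g i).N 1)) c =>
        (g s.1).A 0 s.2 (Fin.cast (g s.1).hN0.symm c)).submatrix finSigmaFinEquiv.symm id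
    | ℓ + 1 => (Matrix.blockDiagonal' fun i => (g i).A (ℓ + 1)).submatrix
        finSigmaFinEquiv.symm finSigmaFinEquiv.symm
  b ℓ := (fun s : Σ i, Fin ((g i).N (ℓ + 1)) => (g s.1).b ℓ s.2) ∘ finSigmaFinEquiv.symm

variable (g : (i : Fin N) → ReluNetwork D d (k i))

lemma concat_b_apply (ℓ : ℕ) (i : Fin N) (p : Fin ((g i).N (ℓ + 1))) :
    (concat g).b ℓ (finSigmaFinEquiv ⟨i, p⟩) = (g i).b ℓ p :=
  congrArg (fun s : Σ i, Fin ((g i).N (ℓ + 1)) => (g s.1).b ℓ s.2)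
    (finSigmaFinEquiv.symm_apply_apply (⟨i, p⟩ : Σ i, Fin ((g i).N (ℓ + 1))))

lemma concat_rowSum (ℓ : ℕ) (x : Fin d → ℝ) (i : Fin N) (p : Fin ((g i).N (ℓ + 1))) :
    ∑ c, (concat g).A ℓ (finSigmaFinEquiv ⟨i, p⟩) c * (concat g).layer ℓ x c
      = ∑ q, (g i).A ℓ p q * (g i).layer ℓ x q := by
  induction ℓ generalizing i with
  | zero =>
    refine (Fintype.sum_equiv (finCongr (g i).hN0) _ _ fun q => ?_).symm
    simp [layer]
  | succ m ih =>
    have hlayer : ∀ i' q, (concat g).layer (m + 1) x (finSigmaFinEquiv ⟨i', q⟩)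
        = (g i').layer (m + 1) x q := by
      intro i' q
      change relu (_ + _) = relu (_ + _)
      rw [ih, concat_b_apply]
    rw [← finSigmaFinEquiv.sum_comp]
    simp only [Matrix.submatrix_apply, Equiv.symm_apply_apply]
    rw [Matrix.sum_blockDiagonal'_row _ _ _
      (fun s a => a * (concat g).layer (m + 1) x (finSigmaFinEquiv s)) (fun _ => zero_mul _)]
    simp only [hlayer]

lemma realize_concat (x : Fin d → ℝ) (i : Fin N) (j : Fin (k i)) :
    (concat g).realize x (finAssemble k i j) = (g i).realize x j := by
  rw [← finSigmaFinEquiv_mk]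
  change ∑ c, (concat g).A D (Fin.cast (concat g).hNlast.symm (finSigmaFinEquiv ⟨i, j⟩)) c
    * (concat g).layer D x c = _
  rw [cast_finSigmaFinEquiv (funext fun i => ((g i).hNlast).symm), concat_rowSum]
  rfl

lemma frobSq_concat_A (ℓ : ℕ) : frobSq ((concat g).A ℓ) = ∑ i, frobSq ((g i).A ℓ) := by
  rw [frobSq, ← finSigmaFinEquiv.sum_comp, Fintype.sum_sigma]
  refine sum_congr rfl fun i _ => sum_congr rfl fun p _ => ?_
  cases ℓ with
  | zero => exact Fintype.sum_equiv (finCongr (g i).hN0.symm) _ _ fun c => by simp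
  | succ m =>
    rw [← finSigmaFinEquiv.sum_comp]
    simp only [Matrix.submatrix_apply, Equiv.symm_apply_apply]
    exact Matrix.sum_blockDiagonal'_row _ _ _ (fun _ a => a ^ 2) fun _ => zero_pow two_ne_zero

lemma sqNorm_concat_b (ℓ : ℕ) : sqNorm ((concat g).b ℓ) = ∑ i, sqNorm ((g i).b ℓ) := by
  rw [sqNorm, ← finSigmaFinEquiv.sum_comp, Fintype.sum_sigma]
  exact sum_congr rfl fun i _ => sum_congr rfl fun p _ =>
    congrArg (· ^ 2) (concat_b_apply g ℓ i p)

lemma widthLe_concat {W : Fin N → ℕ} (h : ∀ i, (g i).widthLe (W i)) :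
    (concat g).widthLe (∑ i, W i) := by
  rintro (_ | ℓ) hpos hle
  · exact absurd hpos (lt_irrefl 0)
  · show ∑ i, (g i).N (ℓ + 1) ≤ _
    exact sum_le_sum fun i _ => h i (ℓ + 1) hpos hle

lemma kappa_concat_le {K : Fin N → ℝ} (hbal : ∀ i, (g i).IsBalanced)
    (hK : ∀ i, frob ((g i).A D) ≤ K i) :
    (concat g).kappa ≤ √((N : ℝ) + 1) ^ D * √(∑ i, K i ^ 2) := by
  have hlast : frob ((concat g).A D) ≤ √(∑ i, K i ^ 2) := by
    rw [frob, frobSq_concat_A]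
    gcongr with i
    rw [← frob_sq]
    exact pow_le_pow_left₀ (Real.sqrt_nonneg _) (hK i) 2
  have hhidden : ∀ ℓ ∈ range D, (concat g).layerNorm ℓ ≤ √((N : ℝ) + 1) := by
    intro ℓ hℓ
    rw [layerNorm, frobSq_concat_A, sqNorm_concat_b, ← sum_add_distrib]
    gcongr
    calc ∑ i, (frobSq ((g i).A ℓ) + sqNorm ((g i).b ℓ)) ≤ ∑ _i : Fin N, (1 : ℝ) :=
          sum_le_sum fun i _ => hbal i ℓ (mem_range.1 hℓ)
      _ = N := by simp
  calc (concat g).kappa = (∏ ℓ ∈ range D, (concat g).layerNorm ℓ) * frob ((concat g).A D) := by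
        rw [kappa_eq, mul_comm]
    _ ≤ (∏ _ℓ ∈ range D, √((N : ℝ) + 1)) * √(∑ i, K i ^ 2) := by
        gcongr with ℓ hℓ
        · exact Real.sqrt_nonneg _
        · exact fun ℓ _ => Real.sqrt_nonneg _
        · exact hhidden ℓ hℓ
    _ = √((N : ℝ) + 1) ^ D * √(∑ i, K i ^ 2) := by rw [prod_const, card_range]

end ReluNetwork

lemma exists_balanced_of_mem_NNclass {d k W D : ℕ} {K : ℝ} {f : (Fin d → ℝ) → Fin k → ℝ}
    (hf : f ∈ NNclass d k W D K) :
    ∃ net : ReluNetwork D d k, net.widthLe W ∧ net.IsBalanced ∧ frob (net.A D) ≤ K ∧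
      net.realize = f := by
  obtain ⟨net, hW, hK, rfl⟩ := hf
  exact ⟨net.balance, hW, net.isBalanced_balance, net.frob_balance_A_eq_kappa ▸ hK,
    net.realize_balance⟩

/-- **Concatenation.** If `φ i ∈ NN(W i, D, K i)` for `i = 1, …, N` are ReLU
networks of the same depth `D` and input dimension `d`, then the concatenated map
`x ↦ (φ 1 x, …, φ N x)` belongs to `NN(∑ i, W i, D, (√(N+1))^D √(∑ i, (K i)²))`. -/
theorem concatenation_NN (d D N : ℕ) (k : Fin N → ℕ) (W : Fin N → ℕ) (K : Fin N → ℝ)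
    (φ : (i : Fin N) → (Fin d → ℝ) → Fin (k i) → ℝ)
    (hφ : ∀ i, φ i ∈ NNclass d (k i) (W i) D (K i)) :
    ∃ Φ ∈ NNclass d (∑ i, k i) (∑ i, W i) D
        (Real.sqrt ((N : ℝ) + 1) ^ D * Real.sqrt (∑ i, K i ^ 2)),
      ∀ (x : Fin d → ℝ) (i : Fin N) (j : Fin (k i)), Φ x (finAssemble k i j) = φ i x j := by
  choose g hW hbal hK hg using fun i => exists_balanced_of_mem_NNclass (hφ i)
  refine ⟨(ReluNetwork.concat g).realize,
    ⟨_, ReluNetwork.widthLe_concat g hW, ReluNetwork.kappa_concat_le g hbal hK, rfl⟩,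
    fun x i j => ?_⟩
  rw [ReluNetwork.realize_concat, hg]
end
end

section
/- For every k ∈ ℕ with k ≥ 1, define Ψ(x,y) := 2(φ̃_k((x+y)/2) − φ̃_k(x/2) − φ̃_k(y/2)) and ψ_k(x,y) := min{max{Ψ(x,y), −1}, 1}. Then for all (x,y) ∈ [−1,1]²: |xy − Ψ(x,y)| ≤ 3/k², hence |xy − ψ_k(x,y)| ≤ 3/k² and ψ_k(x,y) ∈ [−1,1]; moreover ψ_k(x,y) = 0 whenever xy = 0. -/
open scoped BigOperators

noncomputable section

/-- `φ_k(x) = (1/k) ∑_{i=1}^k 2 σ(x − (2i−1)/(2k))` with `σ(t) = max 0 t` the ReLU. -/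
def phiK (k : ℕ) (x : ℝ) : ℝ :=
  (1 / (k : ℝ)) * ∑ i ∈ Finset.Icc 1 k, 2 * max 0 (x - (2 * (i : ℝ) - 1) / (2 * (k : ℝ)))

/-- Even extension `φ̃_k(t) = φ_k(t) + φ_k(−t)`. -/
def phiTilde (k : ℕ) (t : ℝ) : ℝ := phiK k t + phiK k (-t)

/-- `Ψ(x,y) = 2(φ̃_k((x+y)/2) − φ̃_k(x/2) − φ̃_k(y/2))`, from the polarization identity
`xy = 2(((x+y)/2)² − (x/2)² − (y/2)²)`. -/
def PsiK (k : ℕ) (x y : ℝ) : ℝ :=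
  2 * (phiTilde k ((x + y) / 2) - phiTilde k (x / 2) - phiTilde k (y / 2))

/-- `ψ_k(x,y) = min (max (Ψ(x,y)) (−1)) 1`, the clipped multiplier. -/
def psiK (k : ℕ) (x y : ℝ) : ℝ := min (max (PsiK k x y) (-1)) 1

/- On `[(2j-1)/(2k), (2j+1)/(2k)]` exactly the first `j` ramps of `φ_k` are active, so `φ_k` is
the tangent line of `x ↦ x²` at the node `j/k`; hence `φ_k(x) = x² - (x - j/k)²` there, with error
at most `1/(4k²)`. The three errors in the polarization identity are therefore one-signed, and
clipping to `[-1,1]` cannot increase the distance to `xy ∈ [-1,1]`. -/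

lemma sum_Icc_two_mul_sub_one (j : ℕ) : ∑ i ∈ Finset.Icc 1 j, (2 * (i : ℝ) - 1) = (j : ℝ) ^ 2 := by
  induction j with
  | zero => simp
  | succ n ih =>
    rw [Finset.sum_Icc_succ_top (Nat.le_add_left 1 n), ih]
    push_cast
    ring

lemma phiK_of_nonpos (k : ℕ) {x : ℝ} (hx : x ≤ 0) : phiK k x = 0 := by
  refine mul_eq_zero_of_right _ (Finset.sum_eq_zero fun i hi => ?_)
  have hi : (1 : ℝ) ≤ i := by exact_mod_cast (Finset.mem_Icc.mp hi).1
  rw [max_eq_left, mul_zero]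
  have : 0 ≤ (2 * (i : ℝ) - 1) / (2 * k) := div_nonneg (by linarith) (by positivity)
  linarith

lemma phiK_eq_sq_sub_sq {k j : ℕ} (hk : 0 < k) (hjk : j ≤ k) {x : ℝ}
    (hx : |x - j / k| ≤ 1 / (2 * k)) : phiK k x = x ^ 2 - (x - j / k) ^ 2 := by
  have hk' : (0 : ℝ) < k := by exact_mod_cast hk
  obtain ⟨hx₁, hx₂⟩ := abs_le.mp hx
  have hactive : ∀ i ∈ Finset.Icc 1 j, 0 ≤ x - (2 * (i : ℝ) - 1) / (2 * k) := by
    intro i hi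
    have hij : (i : ℝ) ≤ j := by exact_mod_cast (Finset.mem_Icc.mp hi).2
    have : (2 * (i : ℝ) - 1) / (2 * k) = j / k - 1 / (2 * k) - (j - i) / k := by
      field_simp; ring
    rw [this]
    linarith [div_nonneg (sub_nonneg.mpr hij) hk'.le]
  have hinactive : ∀ i ∈ Finset.Icc 1 k, i ∉ Finset.Icc 1 j →
      2 * max 0 (x - (2 * (i : ℝ) - 1) / (2 * k)) = 0 := by
    intro i hi hij
    have hji : (j : ℝ) + 1 ≤ i := by
      exact_mod_cast (by simp only [Finset.mem_Icc] at hi hij; omega : j + 1 ≤ i)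
    have : (2 * (i : ℝ) - 1) / (2 * k) = j / k + 1 / (2 * k) + (i - (j + 1)) / k := by
      field_simp; ring
    rw [this, max_eq_left, mul_zero]
    linarith [div_nonneg (sub_nonneg.mpr hji) hk'.le]
  have hsum : ∑ i ∈ Finset.Icc 1 j, 2 * (x - (2 * (i : ℝ) - 1) / (2 * k))
      = 2 * j * x - j ^ 2 / k := by
    rw [← Finset.mul_sum, Finset.sum_sub_distrib, ← Finset.sum_div, sum_Icc_two_mul_sub_one]
    simp only [Finset.sum_const, Nat.card_Icc, Nat.add_sub_cancel, nsmul_eq_mul]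
    field_simp
  rw [phiK, ← Finset.sum_subset (Finset.Icc_subset_Icc le_rfl hjk) hinactive,
    Finset.sum_congr rfl fun i hi => by rw [max_eq_right (hactive i hi)], hsum]
  field_simp
  ring

lemma sq_sub_phiK_mem_Icc {k : ℕ} (hk : 0 < k) {x : ℝ} (hx : x ∈ Set.Icc (0 : ℝ) 1) :
    x ^ 2 - phiK k x ∈ Set.Icc 0 (1 / (4 * (k : ℝ) ^ 2)) := by
  have hk' : (0 : ℝ) < k := by exact_mod_cast hk
  set j := ⌊k * x + 1 / 2⌋₊
  have hj₁ : (j : ℝ) ≤ k * x + 1 / 2 := Nat.floor_le (by nlinarith [hx.1])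
  have hj₂ : k * x + 1 / 2 < j + 1 := Nat.lt_floor_add_one _
  have hjk : j ≤ k := by
    have : (j : ℝ) < k + 1 := by nlinarith [hx.2]
    exact_mod_cast Nat.lt_succ_iff.mp (by exact_mod_cast this)
  have hdist : |x - j / k| ≤ 1 / (2 * k) :=
    calc |x - j / k| = |(k * x - j) / k| := by congr 1; field_simp
      _ = |k * x - j| / k := by rw [abs_div, abs_of_pos hk']
      _ ≤ 1 / 2 / k := by
          gcongr
          exact abs_le.mpr ⟨by linarith, by linarith⟩
      _ = 1 / (2 * k) := by ring
  rw [phiK_eq_sq_sub_sq hk hjk hdist, sub_sub_cancel]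
  refine ⟨sq_nonneg _, ?_⟩
  calc (x - j / k) ^ 2 = |x - j / k| ^ 2 := (sq_abs _).symm
    _ ≤ (1 / (2 * k)) ^ 2 := pow_le_pow_left₀ (abs_nonneg _) hdist 2
    _ = 1 / (4 * k ^ 2) := by ring

lemma phiTilde_eq_phiK_abs (k : ℕ) (t : ℝ) : phiTilde k t = phiK k |t| := by
  rcases le_total 0 t with ht | ht
  · rw [phiTilde, phiK_of_nonpos k (neg_nonpos.mpr ht), add_zero, abs_of_nonneg ht]
  · rw [phiTilde, phiK_of_nonpos k ht, zero_add, abs_of_nonpos ht]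

lemma sq_sub_phiTilde_mem_Icc {k : ℕ} (hk : 0 < k) {t : ℝ} (ht : t ∈ Set.Icc (-1 : ℝ) 1) :
    t ^ 2 - phiTilde k t ∈ Set.Icc 0 (1 / (4 * (k : ℝ) ^ 2)) := by
  rw [phiTilde_eq_phiK_abs, ← sq_abs t]
  exact sq_sub_phiK_mem_Icc hk ⟨abs_nonneg t, abs_le.mpr ht⟩

lemma abs_mul_sub_PsiK_le {k : ℕ} (hk : 0 < k) {x y : ℝ} (hx : x ∈ Set.Icc (-1 : ℝ) 1)
    (hy : y ∈ Set.Icc (-1 : ℝ) 1) : |x * y - PsiK k x y| ≤ 1 / (k : ℝ) ^ 2 := by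
  obtain ⟨hx₁, hx₂⟩ := hx
  obtain ⟨hy₁, hy₂⟩ := hy
  obtain ⟨hs₁, hs₂⟩ := sq_sub_phiTilde_mem_Icc hk (t := (x + y) / 2) ⟨by linarith, by linarith⟩
  obtain ⟨hx₁', hx₂'⟩ := sq_sub_phiTilde_mem_Icc hk (t := x / 2) ⟨by linarith, by linarith⟩
  obtain ⟨hy₁', hy₂'⟩ := sq_sub_phiTilde_mem_Icc hk (t := y / 2) ⟨by linarith, by linarith⟩
  have hpolar : x * y - PsiK k x y = 2 * (((x + y) / 2) ^ 2 - phiTilde k ((x + y) / 2))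
      - 2 * ((x / 2) ^ 2 - phiTilde k (x / 2)) - 2 * ((y / 2) ^ 2 - phiTilde k (y / 2)) := by
    rw [PsiK]
    ring
  have hε : 1 / (4 * (k : ℝ) ^ 2) = 1 / (k : ℝ) ^ 2 / 4 := by ring
  rw [hpolar, abs_le]
  constructor <;> linarith

lemma abs_sub_clamp_le {a b lo hi : ℝ} (ha : a ∈ Set.Icc lo hi) :
    |a - min (max b lo) hi| ≤ |a - b| := by
  calc |a - min (max b lo) hi| = |min (max a lo) hi - min (max b lo) hi| := by
        rw [max_eq_left ha.1, min_eq_left ha.2]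
    _ ≤ |max a lo - max b lo| := by
        simpa using abs_min_sub_min_le_max (max a lo) hi (max b lo) hi
    _ ≤ |a - b| := abs_max_sub_max_le_abs a b lo

lemma psiK_mem_Icc (k : ℕ) (x y : ℝ) : psiK k x y ∈ Set.Icc (-1 : ℝ) 1 :=
  ⟨le_min (le_max_right _ _) (by norm_num), min_le_right _ _⟩

lemma PsiK_comm (k : ℕ) (x y : ℝ) : PsiK k x y = PsiK k y x := by
  rw [PsiK, PsiK, add_comm x y]
  ring

lemma PsiK_zero_left (k : ℕ) (y : ℝ) : PsiK k 0 y = 0 := by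
  have h0 : phiTilde k 0 = 0 := by rw [phiTilde_eq_phiK_abs, abs_zero, phiK_of_nonpos k le_rfl]
  rw [PsiK, zero_add, zero_div, h0]
  ring

lemma psiK_eq_zero_of_mul_eq_zero (k : ℕ) {x y : ℝ} (h : x * y = 0) : psiK k x y = 0 := by
  have hPsi : PsiK k x y = 0 := by
    rcases mul_eq_zero.mp h with rfl | rfl
    · exact PsiK_zero_left k y
    · rw [PsiK_comm, PsiK_zero_left]
  rw [psiK, hPsi]
  norm_num

/-- For all `(x,y) ∈ [−1,1]²`: `|xy − Ψ(x,y)| ≤ 3/k²`, hence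
`|xy − ψ_k(x,y)| ≤ 3/k²` and `ψ_k(x,y) ∈ [−1,1]`; moreover `ψ_k(x,y) = 0` whenever `xy = 0`. -/
theorem psiK_properties (k : ℕ) (hk : 1 ≤ k) :
    ∀ x ∈ Set.Icc (-1 : ℝ) 1, ∀ y ∈ Set.Icc (-1 : ℝ) 1,
      |x * y - PsiK k x y| ≤ 3 / (k : ℝ) ^ 2 ∧
      |x * y - psiK k x y| ≤ 3 / (k : ℝ) ^ 2 ∧
      psiK k x y ∈ Set.Icc (-1 : ℝ) 1 ∧
      (x * y = 0 → psiK k x y = 0) := by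
  intro x hx y hy
  have hPsi : |x * y - PsiK k x y| ≤ 3 / (k : ℝ) ^ 2 :=
    (abs_mul_sub_PsiK_le hk hx hy).trans
      (div_le_div_of_nonneg_right (by norm_num) (by positivity))
  have hxy : x * y ∈ Set.Icc (-1 : ℝ) 1 := by
    rw [Set.mem_Icc, ← abs_le, abs_mul]
    exact mul_le_one₀ (abs_le.mpr hx) (abs_nonneg y) (abs_le.mpr hy)
  exact ⟨hPsi, (abs_sub_clamp_le hxy).trans hPsi, psiK_mem_Icc k x y,
    psiK_eq_zero_of_mul_eq_zero k⟩
end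
end
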